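/- arXiv:2406.08269 — 2 statements merged into one kernel-verified Lean document; each statement's English description precedes it below -/
import Mathlib

section
/- Let L : Σ* → Δ(Σ_$) be a language model and E an equivalence relation on Δ(Σ_$) such that supp(ρ) = supp(ρ') whenever ρ =_E ρ'. Then ≡_E is a right congruence: for all u, v ∈ Σ*, if u ≡_E v then for every σ ∈ Σ, uσ ≡_E vσ. -/
section LanguageModel

variable {α : Type*} {L : List α → Option α → ℝ} {P : List α → ℝ}

theorem pos_prefixProb_append_singleton_iff (hL : ∀ u σ, 0 ≤ L u σ)
    (hPs : ∀ u σ, P (u ++ [σ]) = P u * L u (some σ)) (u : List α) (σ : α) :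
    0 < P (u ++ [σ]) ↔ 0 < P u ∧ 0 < L u (some σ) := by
  rw [hPs]
  refine ⟨fun h => ?_, fun ⟨hu, hσ⟩ => mul_pos hu hσ⟩
  rcases mul_pos_iff.mp h with h | ⟨_, hσ⟩
  · exact h
  · exact absurd hσ (hL u (some σ)).not_gt

end LanguageModel

-- `Σ_$` is encoded as `Option α`, with `none` standing for `$`.
theorem stmt_4_general (α : Type) [Fintype α]
    (L : List α → Option α → ℝ)
    (hL : ∀ u, (∀ σ, 0 ≤ L u σ) ∧ (∑ σ : Option α, L u σ) = 1)
    (P : List α → ℝ)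
    (hPs : ∀ u σ, P (u ++ [σ]) = P u * L u (some σ))
    (E : (Option α → ℝ) → (Option α → ℝ) → Prop)
    (hsupp : ∀ ρ ρ', E ρ ρ' → {σ : Option α | 0 < ρ σ} = {σ : Option α | 0 < ρ' σ}) :
    ∀ u v : List α,
      ((0 < P u ↔ 0 < P v) ∧
        ∀ w : List α, 0 < P (u ++ w) → 0 < P (v ++ w) → E (L (u ++ w)) (L (v ++ w))) →
      ∀ σ : α,
        ((0 < P (u ++ [σ]) ↔ 0 < P (v ++ [σ])) ∧
          ∀ w : List α, 0 < P (u ++ [σ] ++ w) → 0 < P (v ++ [σ] ++ w) →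
            E (L (u ++ [σ] ++ w)) (L (v ++ [σ] ++ w))) := by
  intro u v ⟨hiff, hcong⟩ σ
  have hpos := pos_prefixProb_append_singleton_iff (fun u => (hL u).1) hPs
  refine ⟨?_, fun w hu hv => ?_⟩
  · rw [hpos, hpos, hiff]
    refine and_congr_right fun hv => ?_
    have hEuv : E (L u) (L v) := by
      simpa using hcong [] (by simpa using hiff.mpr hv) (by simpa using hv)
    exact Set.ext_iff.mp (hsupp _ _ hEuv) (some σ)
  · simpa using hcong (σ :: w) (by simpa using hu) (by simpa using hv)

/-- `≡_E` is a right congruence: for all `u, v ∈ Σ*`, if `u ≡_E v`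
then for every `σ ∈ Σ`, `uσ ≡_E vσ`. Here `u ≡_E v` iff `(P(u) > 0 ↔ P(v) > 0)` and
`∀ w, P(uw) > 0 → P(vw) > 0 → L(uw) =_E L(vw)`; `E` is an equivalence relation on
distributions preserving supports. (`Σ_$ = Option α`, `none` = `$`.) -/
theorem stmt_4 (α : Type) [Fintype α] [Nonempty α]
    (L : List α → Option α → ℝ)
    (hL : ∀ u, (∀ σ, 0 ≤ L u σ) ∧ (∑ σ : Option α, L u σ) = 1)
    (P : List α → ℝ)
    (hP0 : P [] = 1)
    (hPs : ∀ u σ, P (u ++ [σ]) = P u * L u (some σ))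
    (E : (Option α → ℝ) → (Option α → ℝ) → Prop)
    (hE : Equivalence E)
    (hsupp : ∀ ρ ρ', E ρ ρ' → {σ : Option α | 0 < ρ σ} = {σ : Option α | 0 < ρ' σ}) :
    ∀ u v : List α,
      ((0 < P u ↔ 0 < P v) ∧
        ∀ w : List α, 0 < P (u ++ w) → 0 < P (v ++ w) → E (L (u ++ w)) (L (v ++ w))) →
      ∀ σ : α,
        ((0 < P (u ++ [σ]) ↔ 0 < P (v ++ [σ])) ∧
          ∀ w : List α, 0 < P (u ++ [σ] ++ w) → 0 < P (v ++ [σ] ++ w) →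
            E (L (u ++ [σ] ++ w)) (L (v ++ [σ] ++ w))) :=
  stmt_4_general α L hL P hPs E hsupp
end

section
/- Let L : Σ* → Δ(Σ_$) be a language model and E an equivalence relation on Δ(Σ_$) such that supp(ρ) = supp(ρ') whenever ρ =_E ρ'. Let u, v ∈ Σ* with P(u) > 0 and P(v) > 0. For every w ∈ Σ* with P(uw) > 0, if L(uw) and L(vw) are not E-equivalent, then there exists a prefix w' of w such that L(uw') and L(vw') are not E-equivalent and P(vw') > 0 (and also P(uw') > 0, since w' is a prefix of w). -/
/-!
The prefix probabilities `P (v ++ ·)` along `w` start positive (`P v > 0`). If they stay positive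
up to `w` itself, take `w' = w`. Otherwise they drop to zero at a first letter `σ` after a prefix
`y`: `L (v ++ y)` gives `σ` probability zero while `L (u ++ y)` gives it positive probability
(since `P (u ++ w) > 0`), so the two distributions have different supports and are not
`E`-equivalent.
-/

theorem List.exists_eq_append_cons_of_not {α : Type*} (Q : List α → Prop) (hnil : Q [])
    {w : List α} (hw : ¬ Q w) : ∃ y σ z, w = y ++ σ :: z ∧ Q y ∧ ¬ Q (y ++ [σ]) := by
  induction w using List.reverseRecOn with
  | nil => exact absurd hnil hw
  | append_singleton x σ ih =>
    by_cases hx : Q x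
    · exact ⟨x, σ, [], by simp, hx, hw⟩
    · obtain ⟨y, τ, z, rfl, hy, hyτ⟩ := ih hx
      exact ⟨y, τ, z ++ [σ], by simp, hy, hyτ⟩

section PrefixProbability

variable {α : Type*} {L : List α → Option α → ℝ} {P : List α → ℝ}

theorem pos_of_pos_append (hL : ∀ u σ, 0 ≤ L u σ)
    (hPs : ∀ u σ, P (u ++ [σ]) = P u * L u (some σ)) (x : List α) {y : List α}
    (h : 0 < P (x ++ y)) : 0 < P x := by
  induction y using List.reverseRecOn with
  | nil => simpa using h
  | append_singleton y σ ih =>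
    rw [← List.append_assoc, hPs] at h
    exact ih (pos_of_mul_pos_left h (hL _ _))

theorem pos_apply_of_pos_append_singleton (hL : ∀ u σ, 0 ≤ L u σ)
    (hPs : ∀ u σ, P (u ++ [σ]) = P u * L u (some σ)) {x : List α} {σ : α}
    (h : 0 < P (x ++ [σ])) : 0 < L x (some σ) := by
  have hx : 0 < P x := pos_of_pos_append hL hPs x h
  rw [hPs] at h
  exact pos_of_mul_pos_right h hx.le

end PrefixProbability

theorem stmt_9_general (α : Type) [Fintype α]
    (L : List α → Option α → ℝ)
    (hL : ∀ u, (∀ σ, 0 ≤ L u σ) ∧ (∑ σ : Option α, L u σ) = 1)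
    (P : List α → ℝ)
    (hPs : ∀ u σ, P (u ++ [σ]) = P u * L u (some σ))
    (E : (Option α → ℝ) → (Option α → ℝ) → Prop)
    (hsupp : ∀ ρ ρ', E ρ ρ' → {σ : Option α | 0 < ρ σ} = {σ : Option α | 0 < ρ' σ})
    (u v : List α)
    (hv : 0 < P v)
    (w : List α)
    (hw : 0 < P (u ++ w))
    (hne : ¬ E (L (u ++ w)) (L (v ++ w))) :
    ∃ w' z : List α, w = w' ++ z ∧
      ¬ E (L (u ++ w')) (L (v ++ w')) ∧
      0 < P (v ++ w') ∧ 0 < P (u ++ w') := by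
  have hL₀ : ∀ u σ, 0 ≤ L u σ := fun u => (hL u).1
  by_cases hvw : 0 < P (v ++ w)
  · exact ⟨w, [], by simp, hne, hvw, hw⟩
  obtain ⟨y, σ, z, rfl, hvy, hvyσ⟩ :=
    List.exists_eq_append_cons_of_not (fun x => 0 < P (v ++ x)) (by simpa using hv) hvw
  have huyσ : 0 < P (u ++ y ++ [σ]) :=
    pos_of_pos_append hL₀ hPs _ (y := z) (by simpa using hw)
  refine ⟨y, σ :: z, rfl, fun hE => ?_, hvy, pos_of_pos_append hL₀ hPs _ huyσ⟩
  have hσ : some σ ∈ {τ | 0 < L (u ++ y) τ} := pos_apply_of_pos_append_singleton hL₀ hPs huyσ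
  rw [hsupp _ _ hE] at hσ
  exact hvyσ (by rw [← List.append_assoc, hPs]; exact mul_pos hvy hσ)

/-- Let `u, v ∈ Σ*` with `P(u) > 0` and `P(v) > 0`. For every
`w ∈ Σ*` with `P(uw) > 0`, if `L(uw)` and `L(vw)` are not `E`-equivalent, then
there exists a prefix `w'` of `w` (i.e. `w = w' ++ z`) such that `L(uw')` and
`L(vw')` are not `E`-equivalent, `P(vw') > 0`, and also `P(uw') > 0`.
`E` is an equivalence relation on distributions preserving supports.
(`Σ_$ = Option α`, `none` = `$`.) -/
theorem stmt_9 (α : Type) [Fintype α] [Nonempty α]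
    (L : List α → Option α → ℝ)
    (hL : ∀ u, (∀ σ, 0 ≤ L u σ) ∧ (∑ σ : Option α, L u σ) = 1)
    (P : List α → ℝ)
    (hP0 : P [] = 1)
    (hPs : ∀ u σ, P (u ++ [σ]) = P u * L u (some σ))
    (E : (Option α → ℝ) → (Option α → ℝ) → Prop)
    (hE : Equivalence E)
    (hsupp : ∀ ρ ρ', E ρ ρ' → {σ : Option α | 0 < ρ σ} = {σ : Option α | 0 < ρ' σ})
    (u v : List α)
    (hu : 0 < P u) (hv : 0 < P v)
    (w : List α)
    (hw : 0 < P (u ++ w))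
    (hne : ¬ E (L (u ++ w)) (L (v ++ w))) :
    ∃ w' z : List α, w = w' ++ z ∧
      ¬ E (L (u ++ w')) (L (v ++ w')) ∧
      0 < P (v ++ w') ∧ 0 < P (u ++ w') :=
  stmt_9_general α L hL P hPs E hsupp u v hv w hw hne
end
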